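/- arXiv:1211.5125 — 3 statements merged into one kernel-verified Lean document; each statement's English description precedes it below -/
import Mathlib

section
/- Let (X,d) be a metric space with infinitely remote point ω, o ∈ X, r > 0, and φ : X → X a bijective Möbius map with φ(ω) = o, φ(o) = ω, fixing the sphere S = {y : d(o,y) = r} pointwise (S nonempty). Then for all x, y ∈ X distinct from o and ω, d(φ(x), φ(y)) = r² · d(x,y) / (d(o,x) · d(o,y)). -/
/-- Projective equality of triples of reals, i.e. equality in `ℝP²`. -/
def ProjEq (a b : ℝ × ℝ × ℝ) : Prop :=
  ∃ c : ℝ, 0 < c ∧ b.1 = c * a.1 ∧ b.2.1 = c * a.2.1 ∧ b.2.2 = c * a.2.2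

/-- A quadruple is admissible if no entry occurs three or four times. -/
def Admissible {X : Type*} (x y z u : X) : Prop :=
  ¬ ((x = y ∧ y = z) ∨ (x = y ∧ y = u) ∨ (x = z ∧ z = u) ∨ (y = z ∧ z = u))

open scoped Classical in
/-- The cross-ratio triple of a quadruple with respect to an extended metric `d` with
infinitely remote point `ω`, with the standard conventions when `ω` occurs among the
entries: e.g. `crt(x,y,z,ω) = (d(x,y) : d(x,z) : d(y,z))` and `crt(x,y,ω,ω) = (0:1:1)`. -/
noncomputable def crt {X : Type*} (d : X → X → ℝ) (ω x y z u : X) : ℝ × ℝ × ℝ :=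
  if x = ω then
    (if y = ω then ((0 : ℝ), 1, 1) else if z = ω then ((1 : ℝ), 0, 1)
      else if u = ω then ((1 : ℝ), 1, 0) else (d z u, d y u, d y z))
  else if y = ω then
    (if z = ω then ((1 : ℝ), 1, 0) else if u = ω then ((1 : ℝ), 0, 1)
      else (d z u, d x z, d x u))
  else if z = ω then
    (if u = ω then ((0 : ℝ), 1, 1) else (d x y, d y u, d x u))
  else if u = ω then (d x y, d x z, d y z)
  else (d x y * d z u, d x z * d y u, d x u * d y z)


/-!
Compare a cross-ratio triple with `ω` in the last slot with its image under `φ`, in which `ω`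
and `o` trade places, and cross-multiply the projective equality. For `(x, o, s, ω)` with `s` a
fixed point on the sphere this gives `d(o,x) d(o,φ x) = d(o,s)² = r²`; for `(x, y, o, ω)` it gives
`d(x,y) d(o,φ y) = d(φ x,φ y) d(o,x)`. Eliminating `d(o,φ y)` yields the formula.
-/

theorem ProjEq.fst_mul_snd_eq {a b : ℝ × ℝ × ℝ} (h : ProjEq a b) : a.1 * b.2.1 = b.1 * a.2.1 := by
  obtain ⟨c, -, h₁, h₂, -⟩ := h
  rw [h₁, h₂]
  ring

theorem ProjEq.fst_mul_thd_eq {a b : ℝ × ℝ × ℝ} (h : ProjEq a b) : a.1 * b.2.2 = b.1 * a.2.2 := by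
  obtain ⟨c, -, h₁, -, h₃⟩ := h
  rw [h₁, h₃]
  ring

theorem Admissible.of_ne {X : Type*} {x y z u : X} (hyz : y ≠ z) (hyu : y ≠ u) (hzu : z ≠ u) :
    Admissible x y z u := by
  rintro (⟨-, h⟩ | ⟨-, h⟩ | ⟨-, h⟩ | ⟨-, h⟩) <;> contradiction

def IsMoebius {X : Type*} (d : X → X → ℝ) (ω : X) (φ : X → X) : Prop :=
  ∀ x y z u : X, Admissible x y z u → ProjEq (crt d ω x y z u) (crt d ω (φ x) (φ y) (φ z) (φ u))

section CrossRatio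

variable {X : Type*} {d : X → X → ℝ} {ω : X}

theorem crt_of_fourth_eq {x y z : X} (hx : x ≠ ω) (hy : y ≠ ω) (hz : z ≠ ω) :
    crt d ω x y z ω = (d x y, d x z, d y z) := by
  simp [crt, hx, hy, hz]

theorem crt_of_second_eq {x z u : X} (hx : x ≠ ω) (hz : z ≠ ω) (hu : u ≠ ω) :
    crt d ω x ω z u = (d z u, d x z, d x u) := by
  simp [crt, hx, hz, hu]

theorem crt_of_third_eq {x y u : X} (hx : x ≠ ω) (hy : y ≠ ω) (hu : u ≠ ω) :
    crt d ω x y ω u = (d x y, d y u, d x u) := by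
  simp [crt, hx, hy, hu]

variable {φ : X → X} {o : X}

theorem IsMoebius.dist_mul_dist_map_eq_of_fixed (hφ : IsMoebius d ω φ) (hoω : o ≠ ω)
    (hφω : φ ω = o) (hφo : φ o = ω) {s : X} (hs : φ s = s) (hsω : s ≠ ω) (hso : s ≠ o)
    {x : X} (hx : x ≠ ω) (hφx : φ x ≠ ω) :
    d x o * d (φ x) o = d s o * d o s := by
  have h := (hφ x o s ω (.of_ne hso.symm hoω hsω)).fst_mul_thd_eq
  rwa [hφo, hφω, hs, crt_of_fourth_eq hx hoω hsω, crt_of_second_eq hφx hsω hoω] at h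

theorem IsMoebius.dist_mul_dist_map_eq (hφ : IsMoebius d ω φ) (hoω : o ≠ ω)
    (hφω : φ ω = o) (hφo : φ o = ω) {x y : X} (hx : x ≠ ω) (hy : y ≠ ω) (hyo : y ≠ o)
    (hφx : φ x ≠ ω) (hφy : φ y ≠ ω) :
    d x y * d (φ y) o = d (φ x) (φ y) * d x o := by
  have h := (hφ x y o ω (.of_ne hyo hy hoω)).fst_mul_snd_eq
  rwa [hφo, hφω, crt_of_fourth_eq hx hy hoω, crt_of_third_eq hφx hφy hoω] at h

end CrossRatio

theorem strong_inversion_distance_formula_general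
    {X : Type*} (ω o : X) (hoω : o ≠ ω) (d : X → X → ℝ) (r : ℝ) (hr : 0 < r)
    (hd_comm : ∀ x y, x ≠ ω → y ≠ ω → d x y = d y x)
    (φ : X → X) (hbij : Function.Bijective φ)
    (hmob : ∀ x y z u : X, Admissible x y z u →
      ProjEq (crt d ω x y z u) (crt d ω (φ x) (φ y) (φ z) (φ u)))
    (hφω : φ ω = o) (hφo : φ o = ω)
    (hfix : ∀ y, y ≠ ω → d o y = r → φ y = y)
    (hS : ∃ y, y ≠ ω ∧ d o y = r) :
    ∀ x y, x ≠ o → x ≠ ω → y ≠ o → y ≠ ω →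
      d (φ x) (φ y) = r ^ 2 * d x y / (d o x * d o y) := by
  intro x y hxo hxω hyo hyω
  obtain ⟨s, hsω, hsr⟩ := hS
  have hφs : φ s = s := hfix s hsω hsr
  have hso : s ≠ o := by
    rintro rfl
    exact hoω (hφs.symm.trans hφo)
  have hφ_ne : ∀ z, z ≠ o → φ z ≠ ω := fun z hz h => hz (hbij.injective (h.trans hφo.symm))
  have hinv : ∀ z, z ≠ o → z ≠ ω → d o z * d o (φ z) = r ^ 2 := by
    intro z hzo hzω
    have h := IsMoebius.dist_mul_dist_map_eq_of_fixed hmob hoω hφω hφo hφs hsω hso hzω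
      (hφ_ne z hzo)
    rwa [hd_comm z o hzω hoω, hd_comm (φ z) o (hφ_ne z hzo) hoω, hd_comm s o hsω hoω, hsr,
      ← sq] at h
  have hcross := IsMoebius.dist_mul_dist_map_eq hmob hoω hφω hφo hxω hyω hyo
    (hφ_ne x hxo) (hφ_ne y hyo)
  rw [hd_comm (φ y) o (hφ_ne y hyo) hoω, hd_comm x o hxω hoω] at hcross
  have hr2 : r ^ 2 ≠ 0 := pow_ne_zero 2 hr.ne'
  have hox : d o x ≠ 0 := left_ne_zero_of_mul (hinv x hxo hxω ▸ hr2)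
  have hoy : d o y ≠ 0 := left_ne_zero_of_mul (hinv y hyo hyω ▸ hr2)
  rw [eq_div_iff (mul_ne_zero hox hoy)]
  linear_combination d x y * hinv y hyo hyω - d o y * hcross

/-- a bijective Möbius map `φ` swapping `o` and the infinitely remote point
`ω` and fixing the nonempty sphere `S = {y | d(o,y) = r}` pointwise satisfies
`d(φ(x),φ(y)) = r² d(x,y)/(d(o,x)d(o,y))` for all `x, y ∉ {o, ω}`. -/
theorem strong_inversion_distance_formula
    {X : Type*} (ω o : X) (hoω : o ≠ ω) (d : X → X → ℝ) (r : ℝ) (hr : 0 < r)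
    (hd_self : ∀ x, d x x = 0)
    (hd_comm : ∀ x y, x ≠ ω → y ≠ ω → d x y = d y x)
    (hd_pos : ∀ x y, x ≠ ω → y ≠ ω → x ≠ y → 0 < d x y)
    (hd_tri : ∀ x y z, x ≠ ω → y ≠ ω → z ≠ ω → d x z ≤ d x y + d y z)
    (φ : X → X) (hbij : Function.Bijective φ)
    (hmob : ∀ x y z u : X, Admissible x y z u →
      ProjEq (crt d ω x y z u) (crt d ω (φ x) (φ y) (φ z) (φ u)))
    (hφω : φ ω = o) (hφo : φ o = ω)
    (hfix : ∀ y, y ≠ ω → d o y = r → φ y = y)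
    (hS : ∃ y, y ≠ ω ∧ d o y = r) :
    ∀ x y, x ≠ o → x ≠ ω → y ≠ o → y ≠ ω →
      d (φ x) (φ y) = r ^ 2 * d x y / (d o x * d o y) :=
  strong_inversion_distance_formula_general ω o hoω d r hr hd_comm φ hbij hmob hφω hφo hfix hS
end

section
/- Let X be a compact Ptolemy space with properties (E) and (sI), ω ∈ X, ℓ ⊂ X_ω = X \ {ω} a Ptolemy line with unit speed parameterization c : ℝ → X_ω, and b⁺, b⁻ the two opposite Busemann functions of ℓ normalized so that b⁺(c(t)) = −t and b⁻(c(t)) = t. Then b⁺ + b⁻ ≡ 0 on X_ω, i.e., X is Busemann flat along ℓ. -/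
/-- A Möbius structure on a compact space `X`: for every point `ω` a metric
`dist ω : X → X → ℝ` on `X \ {ω}` having `ω` as infinitely remote point, all metrics
pairwise Möbius equivalent, each satisfying the Ptolemy inequality, and compatible
with the topology of `X`. -/
structure MoebiusStructure (X : Type*) [TopologicalSpace X] where
  dist : X → X → X → ℝ
  dist_self : ∀ ω x, dist ω x x = 0
  dist_comm : ∀ ω x y, dist ω x y = dist ω y x
  dist_pos : ∀ ω x y, x ≠ ω → y ≠ ω → x ≠ y → 0 < dist ω x y
  dist_triangle : ∀ ω x y z, x ≠ ω → y ≠ ω → z ≠ ω →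
    dist ω x z ≤ dist ω x y + dist ω y z
  ptolemy : ∀ ω x y z u, x ≠ ω → y ≠ ω → z ≠ ω → u ≠ ω →
    dist ω x z * dist ω y u ≤ dist ω x y * dist ω z u + dist ω x u * dist ω y z
  moebius_equivalent : ∀ ω ω' x y z u, Admissible x y z u →
    ProjEq (crt (dist ω) ω x y z u) (crt (dist ω') ω' x y z u)
  isOpen_ball : ∀ ω x r, x ≠ ω → IsOpen {y | y ≠ ω ∧ dist ω x y < r}
  isOpen_compl_closedBall : ∀ ω x r, x ≠ ω →
    IsOpen ({y | y ≠ ω ∧ r < dist ω x y} ∪ {ω})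
  nhds_basis : ∀ ω x, x ≠ ω → ∀ U ∈ nhds x, ∃ r > 0, {y | y ≠ ω ∧ dist ω x y < r} ⊆ U

namespace MoebiusStructure

variable {X : Type*} [TopologicalSpace X] (S : MoebiusStructure X)

/-- A Möbius map of `(X, S)`: preserves all cross-ratio triples. -/
def IsMoebiusMap (φ : X → X) : Prop :=
  ∀ ω x y z u, Admissible x y z u →
    ProjEq (crt (S.dist ω) ω x y z u) (crt (S.dist ω) ω (φ x) (φ y) (φ z) (φ u))

/-- `(x,z)` separates `(y,u)` on `σ`: `y` and `u` lie in different connected components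
of `σ \ {x,z}`. -/
def Separates (σ : Set X) (x z y u : X) : Prop :=
  ∀ C : Set X, IsPreconnected C → C ⊆ σ \ {x, z} → ¬(y ∈ C ∧ u ∈ C)

/-- A Ptolemy circle: a subset homeomorphic to `S¹` on which the Ptolemy equality holds
for every quadruple of distinct points with separated diagonal. -/
def IsPtolemyCircle (σ : Set X) : Prop :=
  Nonempty (σ ≃ₜ Metric.sphere (0 : ℂ) 1) ∧
    ∀ ω, ∀ x ∈ σ, ∀ y ∈ σ, ∀ z ∈ σ, ∀ u ∈ σ,
      x ≠ ω → y ≠ ω → z ≠ ω → u ≠ ω →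
      x ≠ y → x ≠ z → x ≠ u → y ≠ z → y ≠ u → z ≠ u →
      Separates σ x z y u →
      S.dist ω x z * S.dist ω y u =
        S.dist ω x y * S.dist ω z u + S.dist ω x u * S.dist ω y z

/-- A Ptolemy line in `X_ω`: a Ptolemy circle through `ω` with `ω` removed. -/
def IsPtolemyLine (ω : X) (ℓ : Set X) : Prop :=
  ∃ σ : Set X, S.IsPtolemyCircle σ ∧ ω ∈ σ ∧ ℓ = σ \ {ω}

/-- A metric sphere between `ω` and `ω'`: a sphere of positive radius centered at `ω`
for the metric with infinitely remote point `ω'`. -/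
def IsSphereBetween (ω ω' : X) (Sp : Set X) : Prop :=
  ∃ r : ℝ, 0 < r ∧ Sp = {x | x ≠ ω' ∧ S.dist ω' ω x = r}

/-- A strong space inversion w.r.t. `ω`, `ω'` and a metric sphere `Sp` between them:
a Möbius involution swapping `ω` and `ω'`, fixing `Sp` pointwise, and preserving every
Ptolemy circle through `ω` and `ω'`. -/
def IsStrongInversion (ω ω' : X) (Sp : Set X) (φ : X → X) : Prop :=
  S.IsMoebiusMap φ ∧ Function.Bijective φ ∧ φ ∘ φ = id ∧
    φ ω = ω' ∧ φ ω' = ω ∧ (∀ x ∈ Sp, φ x = x) ∧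
    ∀ σ : Set X, S.IsPtolemyCircle σ → ω ∈ σ → ω' ∈ σ → φ '' σ = σ

/-- Property (E): existence of a Ptolemy circle. -/
def PropE : Prop := ∃ σ : Set X, S.IsPtolemyCircle σ

/-- Property (sI): existence of strong space inversions for every pair of distinct points
and every metric sphere between them. -/
def PropSI : Prop :=
  ∀ ω ω' : X, ω ≠ ω' → ∀ Sp : Set X, S.IsSphereBetween ω ω' Sp →
    ∃ φ : X → X, S.IsStrongInversion ω ω' Sp φ

end MoebiusStructure

open Filter Topology

/-!
For `x` off the line, `F t = d(x, c t)` is convex by the Ptolemy inequality, and `F t - t → b⁺(x)`.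
A strong inversion at `c r` fixing `c 0` acts on the line by `t ↦ r + r² / (t - r)` and sends `x`
to a point `y` whose distances to the line are given by `invDist F r`. Comparing `F` with its
chords to `r ± 1` bounds `b⁺(y) + b⁻(y)` by `r² (F (r + 1) - 2 F r + F (r - 1)) / F r`, and
averaging second differences makes this bound tend to `0` along a sequence `r → ∞`. Along that
sequence the distances from `y` to the line converge to those from the mirror image of `x`, so a
limit point `z` (compactness) satisfies `b⁺(z) = b⁻(x)`, `b⁻(z) = b⁺(x)` and
`b⁺(z) + b⁻(z) ≤ 0`, whereas `b⁺ + b⁻ ≥ 0` everywhere by the triangle inequality.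
-/

section RealFunctions

open Set

theorem exists_mul_secondDiff_le (F : ℝ → ℝ) (a : ℝ) {n : ℕ} (hn : 0 < n) :
    ∃ r ∈ Icc (a + 1) (a + n),
      n * (F (r + 1) - 2 * F r + F (r - 1)) ≤ (F (a + n + 1) - F (a + n)) - (F (a + 1) - F a) := by
  set g : ℕ → ℝ := fun i => F (a + i + 1) - F (a + i) with hg
  have hsum : ∑ i ∈ Finset.range n, n * (g (i + 1) - g i) = ∑ _i ∈ Finset.range n, (g n - g 0) := by
    rw [← Finset.mul_sum, Finset.sum_range_sub, Finset.sum_const, Finset.card_range, nsmul_eq_mul]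
  obtain ⟨i, hi, hle⟩ := Finset.exists_le_of_sum_le (Finset.nonempty_range_iff.2 hn.ne') hsum.le
  have hin : (i : ℝ) + 1 ≤ n := by exact_mod_cast Finset.mem_range.1 hi
  refine ⟨a + i + 1, ⟨by linarith [(Nat.cast_nonneg i : (0 : ℝ) ≤ i)], by linarith⟩, ?_⟩
  have hΔ : g (i + 1) - g i = F (a + i + 1 + 1) - 2 * F (a + i + 1) + F (a + i + 1 - 1) := by
    simp only [hg, Nat.cast_add, Nat.cast_one, add_sub_cancel_right, ← add_assoc]
    ring
  have hends : g n - g 0 = (F (a + n + 1) - F (a + n)) - (F (a + 1) - F a) := by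
    simp [hg]
  rwa [hΔ, hends] at hle

theorem ConvexOn.secondDiff_nonneg {F : ℝ → ℝ} (hF : ConvexOn ℝ univ F) (r : ℝ) :
    0 ≤ F (r + 1) - 2 * F r + F (r - 1) := by
  have h := hF.secant_mono_aux1 (mem_univ (r - 1)) (mem_univ (r + 1)) (sub_one_lt r) (lt_add_one r)
  ring_nf at h ⊢
  linarith

theorem tendsto_add_one_sub_of_tendsto_sub_id {F : ℝ → ℝ} {b : ℝ}
    (hb : Tendsto (fun t => F t - t) atTop (𝓝 b)) :
    Tendsto (fun t => F (t + 1) - F t) atTop (𝓝 1) := by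
  have h := ((hb.comp (tendsto_atTop_add_const_right atTop 1 tendsto_id)).sub hb).add_const 1
  rw [sub_self, zero_add] at h
  refine h.congr fun t => ?_
  simp only [Function.comp_apply, id]
  ring

theorem tendsto_id_div_of_tendsto_sub_id {F : ℝ → ℝ} {b : ℝ}
    (hb : Tendsto (fun t => F t - t) atTop (𝓝 b)) :
    Tendsto (fun t => t / F t) atTop (𝓝 1) := by
  have h : Tendsto (fun t => 1 + (F t - t) / t) atTop (𝓝 1) := by
    simpa using (hb.div_atTop tendsto_id).const_add 1
  have h' := h.inv₀ one_ne_zero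
  rw [inv_one] at h'
  refine h'.congr' ?_
  filter_upwards [eventually_gt_atTop 0] with t ht
  field_simp
  ring

theorem exists_seq_tendsto_sq_mul_secondDiff {F : ℝ → ℝ} {b : ℝ} (hF : ConvexOn ℝ univ F)
    (hpos : ∀ t, 0 < F t) (hb : Tendsto (fun t => F t - t) atTop (𝓝 b)) :
    ∃ r : ℕ → ℝ, (∀ k : ℕ, (k : ℝ) < r k) ∧
      Tendsto (fun k => r k ^ 2 * (F (r k + 1) - 2 * F (r k) + F (r k - 1)) / F (r k))
        atTop (𝓝 0) := by
  choose r hr hrΔ using fun k : ℕ => exists_mul_secondDiff_le F ((k : ℝ) + 1) (Nat.succ_pos k)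
  push_cast at hr hrΔ
  set η : ℕ → ℝ := fun k =>
    (F ((k : ℝ) + 1 + (k + 1) + 1) - F ((k : ℝ) + 1 + (k + 1))) - (F ((k : ℝ) + 1 + 1) - F (k + 1))
  have hk : Tendsto (fun k : ℕ => (k : ℝ) + 1) atTop atTop :=
    tendsto_atTop_add_const_right _ 1 tendsto_natCast_atTop_atTop
  have hslope := tendsto_add_one_sub_of_tendsto_sub_id hb
  have hη : Tendsto η atTop (𝓝 0) := by
    simpa using (hslope.comp (hk.atTop_add_atTop hk)).sub (hslope.comp hk)
  have hratio : Tendsto (fun k => r k / F (r k)) atTop (𝓝 1) :=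
    (tendsto_id_div_of_tendsto_sub_id hb).comp
      (tendsto_atTop_mono (fun k => (hr k).1) (tendsto_atTop_add_const_right _ 1 hk))
  have hbound : Tendsto (fun k => 2 * (r k / F (r k)) * η k) atTop (𝓝 0) := by
    simpa using (hratio.const_mul 2).mul hη
  refine ⟨r, fun k => by linarith [(hr k).1], tendsto_of_tendsto_of_tendsto_of_le_of_le
    tendsto_const_nhds hbound (fun k => ?_) (fun k => ?_)⟩
  · exact div_nonneg (mul_nonneg (sq_nonneg _) (hF.secondDiff_nonneg _)) (hpos _).le
  · have hΔ := hF.secondDiff_nonneg (r k)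
    have hsq : r k ^ 2 * (F (r k + 1) - 2 * F (r k) + F (r k - 1)) ≤ 2 * r k * η k := by
      nlinarith [(hr k).1, hrΔ k, mul_le_mul_of_nonneg_right (hr k).2 hΔ]
    calc _ ≤ 2 * r k * η k / F (r k) := div_le_div_of_nonneg_right hsq (hpos _).le
      _ = _ := by ring

/-- The distance `d(φ x, c τ)` when `φ` is the inversion at `c r` fixing `c 0`, the line `c` has
unit speed and `F t = d(x, c t)`. -/
noncomputable def invDist (F : ℝ → ℝ) (r τ : ℝ) : ℝ :=
  F (r + r ^ 2 / (τ - r)) * |τ - r| / F r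

theorem invDist_add_invDist_neg_le {F : ℝ → ℝ} (hF : ConvexOn ℝ univ F) {r τ : ℝ}
    (hr : 0 < r) (hFr : 0 < F r) (hτ : r + r ^ 2 < τ) :
    invDist F r τ - τ + (invDist F r (-τ) - τ) ≤
      r ^ 2 * (F (r + 1) - 2 * F r + F (r - 1)) / F r := by
  have hτr : 0 < τ - r := by nlinarith
  have hτr' : 0 < τ + r := by linarith
  set δ₁ := r ^ 2 / (τ - r)
  set δ₂ := r ^ 2 / (τ + r)
  have hδ₁τ : δ₁ * (τ - r) = r ^ 2 := div_mul_cancel₀ _ hτr.ne'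
  have hδ₂τ : δ₂ * (τ + r) = r ^ 2 := div_mul_cancel₀ _ hτr'.ne'
  have hδ₁ : 0 < δ₁ ∧ δ₁ < 1 := ⟨by positivity, by rw [div_lt_one hτr]; linarith⟩
  have hδ₂ : 0 < δ₂ ∧ δ₂ < 1 := ⟨by positivity, by rw [div_lt_one hτr']; linarith⟩
  have hup := hF.secant_mono_aux1 (mem_univ r) (mem_univ (r + 1)) (lt_add_of_pos_right r hδ₁.1)
    (by linarith [hδ₁.2])
  have hdown := hF.secant_mono_aux1 (mem_univ (r - 1)) (mem_univ r) (by linarith [hδ₂.2])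
    (sub_lt_self r hδ₂.1)
  have h₁ : invDist F r τ = F (r + δ₁) * (τ - r) / F r := by
    rw [invDist, abs_of_pos hτr]
  have h₂ : invDist F r (-τ) = F (r - δ₂) * (τ + r) / F r := by
    rw [invDist, abs_of_neg (by linarith), show -τ - r = -(τ + r) by ring, div_neg,
      ← sub_eq_add_neg]
    ring
  have key₁ : F (r + δ₁) * (τ - r) ≤ (τ - r) * F r + r ^ 2 * (F (r + 1) - F r) := by
    have hup' : F (r + δ₁) ≤ (1 - δ₁) * F r + δ₁ * F (r + 1) := by ring_nf at hup ⊢; linarith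
    linear_combination (τ - r) * hup' + (F (r + 1) - F r) * hδ₁τ
  have key₂ : F (r - δ₂) * (τ + r) ≤ (τ + r) * F r - r ^ 2 * (F r - F (r - 1)) := by
    have hdown' : F (r - δ₂) ≤ δ₂ * F (r - 1) + (1 - δ₂) * F r := by
      ring_nf at hdown ⊢; linarith
    linear_combination (τ + r) * hdown' + (F (r - 1) - F r) * hδ₂τ
  rw [h₁, h₂, div_sub' hFr.ne', div_sub' hFr.ne', ← add_div, div_le_div_iff_of_pos_right hFr]
  linear_combination key₁ + key₂

theorem tendsto_invDist {F : ℝ → ℝ} {b : ℝ} (hF : Continuous F)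
    (hb : Tendsto (fun t => F t - t) atTop (𝓝 b)) (τ : ℝ) :
    Tendsto (fun r => invDist F r τ) atTop (𝓝 (F (-τ))) := by
  have hFtop : Tendsto F atTop atTop :=
    (hb.add_atTop tendsto_id).congr fun t => sub_add_cancel _ _
  have hsub : Tendsto (fun r => τ - r) atTop atBot :=
    tendsto_atBot_add_const_left _ τ tendsto_neg_atTop_atBot
  have harg : Tendsto (fun r => r + r ^ 2 / (τ - r)) atTop (𝓝 (-τ)) := by
    have h := (tendsto_const_nhds (x := τ ^ 2)).div_atBot hsub |>.const_add (-τ)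
    rw [add_zero] at h
    refine h.congr' ?_
    filter_upwards [eventually_gt_atTop τ] with r hr
    field_simp [sub_ne_zero.2 hr.ne]
    ring
  have hratio : Tendsto (fun r => |τ - r| / F r) atTop (𝓝 1) := by
    have h := (tendsto_id_div_of_tendsto_sub_id hb).sub
      (tendsto_const_nhds (x := τ).div_atTop hFtop)
    rw [sub_zero] at h
    refine h.congr' ?_
    filter_upwards [eventually_gt_atTop τ] with r hr
    rw [abs_of_neg (sub_neg.2 hr), neg_sub, sub_div]
  simpa [invDist, mul_div_assoc] using ((hF.tendsto (-τ)).comp harg).mul hratio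

theorem eq_add_sq_div_of_abs_mul_eq {r s t : ℝ} (hr : 0 < r) (ht : t ≠ r)
    (h₁ : |s - r| * |t - r| = r ^ 2) (h₂ : |s| * |t - r| = r * |t|) :
    s = r + r ^ 2 / (t - r) := by
  have hsq₁ := congrArg (· ^ 2) h₁
  have hsq₂ := congrArg (· ^ 2) h₂
  simp only [mul_pow, sq_abs] at hsq₁ hsq₂
  have key : r * (t - r) * (s * (t - r) - r * t) = 0 := by
    linear_combination (1 / 2 : ℝ) * (hsq₂ - hsq₁)
  have htr : t - r ≠ 0 := sub_ne_zero.2 ht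
  rcases mul_eq_zero.1 key with h | h
  · exact absurd h (mul_ne_zero hr.ne' htr)
  · field_simp
    linarith

end RealFunctions

theorem admissible_of_ne_of_ne {X : Type*} {x y z u : X} (hxy : x ≠ y) (hzu : z ≠ u) :
    Admissible x y z u := by
  simp only [Admissible, not_or, not_and]
  exact ⟨fun h => absurd h hxy, fun h => absurd h hxy, fun _ h => absurd h hzu,
    fun _ h => absurd h hzu⟩

namespace MoebiusStructure

variable {X : Type*} [TopologicalSpace X] (S : MoebiusStructure X)

theorem dist_nonneg {ω x y : X} (hx : x ≠ ω) (hy : y ≠ ω) : 0 ≤ S.dist ω x y := by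
  rcases eq_or_ne x y with rfl | hxy
  · rw [S.dist_self]
  · exact (S.dist_pos ω x y hx hy hxy).le

theorem eq_of_unit_speed {ω : X} {c : ℝ → X} (hunit : ∀ s t : ℝ, S.dist ω (c s) (c t) = |s - t|)
    {s t : ℝ} (h : c s = c t) : s = t := by
  have := hunit s t
  rwa [h, S.dist_self, eq_comm, abs_eq_zero, sub_eq_zero] at this

theorem convexOn_dist_line {ω x : X} {c : ℝ → X}
    (hunit : ∀ s t : ℝ, S.dist ω (c s) (c t) = |s - t|) (hx : x ≠ ω) (hc : ∀ t, c t ≠ ω) :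
    ConvexOn ℝ Set.univ (fun t => S.dist ω x (c t)) := by
  refine convexOn_of_slope_mono_adjacent convex_univ fun {s m t} _ _ hsm hmt => ?_
  have h := S.ptolemy ω x (c s) (c m) (c t) hx (hc s) (hc m) (hc t)
  rw [hunit, hunit, hunit, abs_of_neg (sub_neg.2 (hsm.trans hmt)), abs_of_neg (sub_neg.2 hmt),
    abs_of_neg (sub_neg.2 hsm)] at h
  rw [div_le_div_iff₀ (sub_pos.2 hsm) (sub_pos.2 hmt)]
  nlinarith [h]

theorem continuousAt_of_sub_le_mul_dist {ω z : X} {f : X → ℝ} {K : ℝ}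
    (hK : ∀ u v, u ≠ ω → v ≠ ω → f u - f v ≤ K * S.dist ω u v) (hz : z ≠ ω) :
    ContinuousAt f z := by
  rw [ContinuousAt, Metric.tendsto_nhds]
  intro ε hε
  have hδ : 0 < ε / (|K| + 1) := by positivity
  filter_upwards [(S.isOpen_ball ω z _ hz).mem_nhds ⟨hz, by rwa [S.dist_self]⟩] with u ⟨hu, hzu⟩
  have hd := S.dist_nonneg hz hu
  rw [lt_div_iff₀ (by positivity)] at hzu
  have h₁ := hK u z hu hz
  have h₂ := hK z u hz hu
  rw [S.dist_comm] at h₁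
  rw [Real.dist_eq, abs_sub_lt_iff]
  constructor <;> nlinarith [le_abs_self K, neg_abs_le K]

theorem continuousAt_dist {ω q z : X} (hq : q ≠ ω) (hz : z ≠ ω) :
    ContinuousAt (fun v => S.dist ω v q) z :=
  S.continuousAt_of_sub_le_mul_dist (K := 1) (fun u v hu hv => by
    linarith [S.dist_triangle ω u v q hu hv hq]) hz

/-- `X` need not be first countable, so an ultrafilter stands in for a convergent subsequence. -/
theorem exists_ultrafilter_tendsto_ne [CompactSpace X] {ι : Type*} {l : Filter ι} [l.NeBot]
    {Y : ι → X} {ω q : X} {R : ℝ} (hq : q ≠ ω)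
    (hY : ∀ᶠ i in l, Y i ≠ ω ∧ S.dist ω q (Y i) ≤ R) :
    ∃ z, z ≠ ω ∧ ∃ U : Ultrafilter ι, ↑U ≤ l ∧ Tendsto Y U (𝓝 z) := by
  set U := Ultrafilter.of l
  obtain ⟨z, hz⟩ : ∃ z, Tendsto Y U (𝓝 z) := ⟨_, (U.map Y).le_nhds_lim⟩
  refine ⟨z, ?_, U, Ultrafilter.of_le l, hz⟩
  rintro rfl
  have hYV : ∀ᶠ i in (U : Filter ι), Y i ∈ _ :=
    hz ((S.isOpen_compl_closedBall z q R hq).mem_nhds (Or.inr rfl))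
  obtain ⟨i, hiV, hiω, hiR⟩ := (hYV.and (Ultrafilter.of_le l hY)).exists
  rcases hiV with ⟨-, hR⟩ | hiω'
  · linarith
  · exact hiω hiω'

section Inversion

variable {S} {φ : X → X} {ω p : X}

theorem IsMoebiusMap.exists_dist_map_eq (hφ : S.IsMoebiusMap φ) (hinj : Function.Injective φ)
    (hp : p ≠ ω) (hφω : φ ω = p) (hφp : φ p = ω) {u v : X} (hu : u ≠ ω) (hup : u ≠ p)
    (hv : v ≠ ω) (hvp : v ≠ p) (huv : u ≠ v) :
    ∃ e : ℝ, S.dist ω (φ u) (φ v) = e * S.dist ω u v ∧ S.dist ω (φ v) p = e * S.dist ω u p ∧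
      S.dist ω (φ u) p = e * S.dist ω v p := by
  have hφu : φ u ≠ ω := fun h => hup (hinj (h.trans hφp.symm))
  have hφv : φ v ≠ ω := fun h => hvp (hinj (h.trans hφp.symm))
  have h := hφ ω u v p ω (admissible_of_ne_of_ne huv hp)
  rw [hφp, hφω] at h
  simp only [crt, hu, hv, hp, hφu, hφv, if_false, if_true] at h
  obtain ⟨e, -, h₁, h₂, h₃⟩ := h
  exact ⟨e, h₁, h₂, h₃⟩

variable {w : X}

theorem IsMoebiusMap.dist_map_mul_dist (hφ : S.IsMoebiusMap φ) (hinj : Function.Injective φ)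
    (hp : p ≠ ω) (hφω : φ ω = p) (hφp : φ p = ω) (hw : φ w = w) (hwω : w ≠ ω) (hwp : w ≠ p)
    {u : X} (hu : u ≠ ω) (hup : u ≠ p) :
    S.dist ω (φ u) p * S.dist ω u p = S.dist ω w p ^ 2 := by
  rcases eq_or_ne u w with rfl | huw
  · rw [hw, sq]
  obtain ⟨e, -, h₂, h₃⟩ := hφ.exists_dist_map_eq hinj hp hφω hφp hu hup hwω hwp huw
  rw [hw] at h₂
  rw [h₃, sq]
  nth_rewrite 2 [h₂]
  ring

theorem IsMoebiusMap.dist_map_map_mul (hφ : S.IsMoebiusMap φ) (hinj : Function.Injective φ)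
    (hp : p ≠ ω) (hφω : φ ω = p) (hφp : φ p = ω) (hw : φ w = w) (hwω : w ≠ ω) (hwp : w ≠ p)
    {u v : X} (hu : u ≠ ω) (hup : u ≠ p) (hv : v ≠ ω) (hvp : v ≠ p) :
    S.dist ω (φ u) (φ v) * (S.dist ω u p * S.dist ω v p) = S.dist ω w p ^ 2 * S.dist ω u v := by
  rcases eq_or_ne u v with rfl | huv
  · simp [S.dist_self]
  obtain ⟨e, h₁, -, h₃⟩ := hφ.exists_dist_map_eq hinj hp hφω hφp hu hup hv hvp huv
  rw [← hφ.dist_map_mul_dist hinj hp hφω hφp hw hwω hwp hu hup, h₁, h₃]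
  ring

theorem IsStrongInversion.apply_line {σ Sp : Set X} {c : ℝ → X} {r : ℝ}
    (hσ : S.IsPtolemyCircle σ) (hω : ω ∈ σ) (hrange : Set.range c = σ \ {ω})
    (hunit : ∀ s t : ℝ, S.dist ω (c s) (c t) = |s - t|) (hr : 0 < r)
    (hφ : S.IsStrongInversion ω (c r) Sp φ) (h0 : c 0 ∈ Sp) {t : ℝ} (ht : t ≠ r) :
    φ (c t) = c (r + r ^ 2 / (t - r)) := by
  obtain ⟨hmoeb, hbij, -, hφω, hφp, hfix, hcirc⟩ := hφ
  have hc : ∀ t, c t ∈ σ ∧ c t ≠ ω := fun t => (hrange ▸ Set.mem_range_self t : c t ∈ σ \ {ω})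
  have hcr : ∀ {t}, t ≠ r → c t ≠ c r := fun h h' => h (S.eq_of_unit_speed hunit h')
  obtain ⟨s, hs⟩ : φ (c t) ∈ Set.range c := by
    refine hrange ▸ ⟨hcirc σ hσ hω (hc r).1 ▸ Set.mem_image_of_mem φ (hc t).1, fun h => ?_⟩
    exact hcr ht (hbij.1 (h.trans hφp.symm))
  have hdist := hmoeb.dist_map_mul_dist hbij.1 (hc r).2 hφω hφp (hfix _ h0) (hc 0).2
    (hcr hr.ne) (hc t).2 (hcr ht)
  have hdist₀ := hmoeb.dist_map_map_mul hbij.1 (hc r).2 hφω hφp (hfix _ h0) (hc 0).2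
    (hcr hr.ne) (hc t).2 (hcr ht) (hc 0).2 (hcr hr.ne)
  simp only [← hs, hfix _ h0, hunit, zero_sub, abs_neg, abs_of_pos hr, sub_zero] at hdist hdist₀
  have hdist₀' : |s| * |t - r| = r * |t| :=
    mul_left_cancel₀ hr.ne' (by linear_combination hdist₀)
  rw [← hs, eq_add_sq_div_of_abs_mul_eq hr ht hdist hdist₀']

end Inversion

theorem exists_dist_eq_invDist (hSI : S.PropSI) {ω : X} {σ : Set X} {c : ℝ → X}
    (hσ : S.IsPtolemyCircle σ) (hω : ω ∈ σ) (hrange : Set.range c = σ \ {ω})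
    (hunit : ∀ s t : ℝ, S.dist ω (c s) (c t) = |s - t|) {x : X} (hx : x ≠ ω)
    (hxc : x ∉ Set.range c) {r : ℝ} (hr : 0 < r) :
    ∃ y, y ≠ ω ∧ ∀ τ, τ ≠ r → S.dist ω y (c τ) = invDist (fun t => S.dist ω x (c t)) r τ := by
  have hc : ∀ t, c t ∈ σ ∧ c t ≠ ω := fun t => (hrange ▸ Set.mem_range_self t : c t ∈ σ \ {ω})
  have hcr : ∀ {t}, t ≠ r → c t ≠ c r := fun h h' => h (S.eq_of_unit_speed hunit h')
  have hxr : x ≠ c r := fun h => hxc ⟨r, h.symm⟩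
  set Sp := {u | u ≠ c r ∧ S.dist (c r) ω u = S.dist (c r) ω (c 0)}
  have h0 : c 0 ∈ Sp := ⟨hcr hr.ne, rfl⟩
  obtain ⟨φ, hφ⟩ := hSI ω (c r) (hc r).2.symm Sp
    ⟨_, S.dist_pos _ _ _ (hc r).2.symm (hcr hr.ne) (hc 0).2.symm, rfl⟩
  have hmap := fun t (ht : t ≠ r) => hφ.apply_line hσ hω hrange hunit hr h0 ht
  obtain ⟨hmoeb, hbij, -, hφω, hφp, hfix, -⟩ := hφ
  refine ⟨φ x, fun h => hxr (hbij.1 (h.trans hφp.symm)), fun τ hτ => ?_⟩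
  have hτr : τ - r ≠ 0 := sub_ne_zero.2 hτ
  set u := r + r ^ 2 / (τ - r)
  have hur : u - r = r ^ 2 / (τ - r) := add_sub_cancel_left _ _
  have hu : u ≠ r := fun h => by
    rw [h, sub_self, eq_comm, div_eq_zero_iff] at hur
    exact hur.elim (pow_ne_zero 2 hr.ne') hτr
  have hφu : φ (c u) = c τ := by
    rw [hmap u hu, hur, div_div_eq_mul_div, mul_div_cancel_left₀ _ (pow_ne_zero 2 hr.ne')]
    ring_nf
  have h := hmoeb.dist_map_map_mul hbij.1 (hc r).2 hφω hφp (hfix _ h0) (hc 0).2 (hcr hr.ne) hx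
    hxr (hc u).2 (hcr hu)
  rw [hφu, hunit, hunit, hur, zero_sub, abs_neg, abs_of_pos hr, abs_div,
    abs_of_pos (by positivity : 0 < r ^ 2)] at h
  have hFr : 0 < S.dist ω x (c r) := S.dist_pos _ _ _ hx (hc r).2 hxr
  have hτr' : 0 < |τ - r| := abs_pos.2 hτr
  rw [invDist, eq_div_iff hFr.ne']
  field_simp at h
  linear_combination h

def IsBusemannFunction (ω : X) (c : ℝ → X) (b : X → ℝ) : Prop :=
  ∀ x, x ≠ ω → Tendsto (fun t => S.dist ω x (c t) - t) atTop (𝓝 (b x))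

section Busemann

variable {S} {ω : X} {c c' : ℝ → X} {b b' : X → ℝ}

theorem IsBusemannFunction.sub_le_dist (hb : S.IsBusemannFunction ω c b) (hc : ∀ t, c t ≠ ω)
    {u v : X} (hu : u ≠ ω) (hv : v ≠ ω) : b u - b v ≤ S.dist ω u v :=
  le_of_tendsto ((hb u hu).sub (hb v hv)) (Eventually.of_forall fun t => by
    linarith [S.dist_triangle ω u v (c t) hu hv (hc t)])

theorem IsBusemannFunction.eq_of_dist_eq (hb : S.IsBusemannFunction ω c b)
    (hb' : S.IsBusemannFunction ω c' b') {z x : X} (hz : z ≠ ω) (hx : x ≠ ω)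
    (h : ∀ t, S.dist ω z (c t) = S.dist ω x (c' t)) : b z = b' x :=
  tendsto_nhds_unique (by simpa only [h] using hb z hz) (hb' x hx)

theorem IsBusemannFunction.add_nonneg (hb : S.IsBusemannFunction ω c b)
    (hb' : S.IsBusemannFunction ω (fun t => c (-t)) b') (hc : ∀ t, c t ≠ ω)
    (hunit : ∀ s t : ℝ, S.dist ω (c s) (c t) = |s - t|) {v : X} (hv : v ≠ ω) :
    0 ≤ b v + b' v := by
  refine ge_of_tendsto ((hb v hv).add (hb' v hv)) ?_
  filter_upwards [eventually_ge_atTop 0] with t ht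
  have h := S.dist_triangle ω (c t) v (c (-t)) (hc t) hv (hc (-t))
  rw [hunit, S.dist_comm ω (c t), sub_neg_eq_add, abs_of_nonneg (by linarith)] at h
  linarith

theorem IsBusemannFunction.continuousAt_add (hb : S.IsBusemannFunction ω c b)
    (hb' : S.IsBusemannFunction ω c' b') (hc : ∀ t, c t ≠ ω) (hc' : ∀ t, c' t ≠ ω) {z : X}
    (hz : z ≠ ω) : ContinuousAt (fun v => b v + b' v) z :=
  S.continuousAt_of_sub_le_mul_dist (K := 2) (fun u v hu hv => by
    linarith [hb.sub_le_dist hc hu hv, hb'.sub_le_dist hc' hu hv]) hz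

end Busemann

theorem exists_mirror_point [CompactSpace X] (hSI : S.PropSI) {ω : X} {σ : Set X} {c : ℝ → X}
    (hσ : S.IsPtolemyCircle σ) (hω : ω ∈ σ) (hrange : Set.range c = σ \ {ω})
    (hunit : ∀ s t : ℝ, S.dist ω (c s) (c t) = |s - t|) {bplus bminus : X → ℝ}
    (hbplus : S.IsBusemannFunction ω c bplus)
    (hbminus : S.IsBusemannFunction ω (fun t => c (-t)) bminus) {x : X} (hx : x ≠ ω)
    (hxc : x ∉ Set.range c) :
    ∃ z, z ≠ ω ∧ (∀ t, S.dist ω z (c t) = S.dist ω x (c (-t))) ∧ bplus z + bminus z ≤ 0 := by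
  have hc : ∀ t, c t ≠ ω := fun t => (hrange ▸ Set.mem_range_self t : c t ∈ σ \ {ω}).2
  set F := fun t => S.dist ω x (c t)
  have hFpos : ∀ t, 0 < F t := fun t => S.dist_pos _ _ _ hx (hc t) fun h => hxc ⟨t, h.symm⟩
  have hFconv : ConvexOn ℝ Set.univ F := S.convexOn_dist_line hunit hx hc
  obtain ⟨r, hr, hrlim⟩ := exists_seq_tendsto_sq_mul_secondDiff hFconv hFpos (hbplus x hx)
  have hr0 : ∀ k, 0 < r k := fun k => (Nat.cast_nonneg k).trans_lt (hr k)
  have hrtop : Tendsto r atTop atTop :=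
    tendsto_atTop_mono (fun k => (hr k).le) tendsto_natCast_atTop_atTop
  choose Y hYω hY using fun k => S.exists_dist_eq_invDist hSI hσ hω hrange hunit hx hxc (hr0 k)
  have hYlim : ∀ τ, Tendsto (fun k => S.dist ω (Y k) (c τ)) atTop (𝓝 (F (-τ))) := fun τ =>
    ((tendsto_invDist (continuousOn_univ.1 (hFconv.continuousOn isOpen_univ)) (hbplus x hx)
      τ).comp hrtop).congr' ((hrtop.eventually_gt_atTop τ).mono fun k hk => (hY k τ hk.ne).symm)
  have hYsum : ∀ k, bplus (Y k) + bminus (Y k) ≤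
      r k ^ 2 * (F (r k + 1) - 2 * F (r k) + F (r k - 1)) / F (r k) := fun k => by
    refine le_of_tendsto ((hbplus _ (hYω k)).add (hbminus _ (hYω k))) ?_
    filter_upwards [eventually_gt_atTop (r k + r k ^ 2)] with τ hτ
    have hτr : r k < τ := by nlinarith
    rw [hY k τ hτr.ne', hY k (-τ) (by linarith [hr0 k])]
    exact invDist_add_invDist_neg_le hFconv (hr0 k) (hFpos _) hτ
  obtain ⟨z, hzω, U, hUl, hYz⟩ := S.exists_ultrafilter_tendsto_ne (hc 0)
    (((hYlim 0).eventually (gt_mem_nhds (lt_add_one _))).mono fun k hk =>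
      ⟨hYω k, (S.dist_comm _ _ _).trans_le hk.le⟩)
  refine ⟨z, hzω, fun τ => ?_, ?_⟩
  · exact tendsto_nhds_unique ((S.continuousAt_dist (hc τ) hzω).tendsto.comp hYz)
      ((hYlim τ).mono_left hUl)
  · exact le_of_tendsto_of_tendsto' ((hbplus.continuousAt_add hbminus hc (fun t => hc (-t))
      hzω).tendsto.comp hYz) (hrlim.mono_left hUl) hYsum

end MoebiusStructure

theorem busemann_flat_general
    {X : Type*} [TopologicalSpace X] [CompactSpace X]
    (S : MoebiusStructure X) (hSI : S.PropSI)
    (ω : X) (σ : Set X) (hσ : S.IsPtolemyCircle σ) (hω : ω ∈ σ)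
    (c : ℝ → X) (hrange : Set.range c = σ \ {ω})
    (hunit : ∀ s t : ℝ, S.dist ω (c s) (c t) = |s - t|)
    (bplus bminus : X → ℝ)
    (hbplus : ∀ x, x ≠ ω →
      Tendsto (fun t : ℝ => S.dist ω x (c t) - t) atTop (𝓝 (bplus x)))
    (hbminus : ∀ x, x ≠ ω →
      Tendsto (fun t : ℝ => S.dist ω x (c (-t)) - t) atTop (𝓝 (bminus x)))
    (hnplus : ∀ t : ℝ, bplus (c t) = -t)
    (hnminus : ∀ t : ℝ, bminus (c t) = t) :
    ∀ x, x ≠ ω → bplus x + bminus x = 0 := by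
  intro x hx
  by_cases hxc : x ∈ Set.range c
  · obtain ⟨t, rfl⟩ := hxc
    rw [hnplus, hnminus, neg_add_cancel]
  have hc : ∀ t, c t ≠ ω := fun t => (hrange ▸ Set.mem_range_self t : c t ∈ σ \ {ω}).2
  have hBplus : S.IsBusemannFunction ω c bplus := hbplus
  have hBminus : S.IsBusemannFunction ω (fun t => c (-t)) bminus := hbminus
  obtain ⟨z, hzω, hdist, hz⟩ := S.exists_mirror_point hSI hσ hω hrange hunit hBplus hBminus hx hxc
  have hplus : bplus z = bminus x := hBplus.eq_of_dist_eq hBminus hzω hx hdist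
  have hminus : bminus z = bplus x :=
    hBminus.eq_of_dist_eq hBplus hzω hx fun t => by simpa using hdist (-t)
  linarith [hBplus.add_nonneg hBminus hc hunit hx]

/-- a compact Ptolemy space with properties (E) and (sI) is Busemann flat:
for a Ptolemy line `ℓ = σ \ {ω}` with unit speed parameterization `c` and opposite
Busemann functions normalized by `b⁺(c(t)) = -t`, `b⁻(c(t)) = t`, one has
`b⁺ + b⁻ ≡ 0` on `X_ω`. -/
theorem busemann_flat
    {X : Type*} [TopologicalSpace X] [CompactSpace X] [T2Space X]
    (S : MoebiusStructure X) (hE : S.PropE) (hSI : S.PropSI)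
    (ω : X) (σ : Set X) (hσ : S.IsPtolemyCircle σ) (hω : ω ∈ σ)
    (c : ℝ → X) (hrange : Set.range c = σ \ {ω})
    (hunit : ∀ s t : ℝ, S.dist ω (c s) (c t) = |s - t|)
    (bplus bminus : X → ℝ)
    (hbplus : ∀ x, x ≠ ω →
      Tendsto (fun t : ℝ => S.dist ω x (c t) - t) atTop (𝓝 (bplus x)))
    (hbminus : ∀ x, x ≠ ω →
      Tendsto (fun t : ℝ => S.dist ω x (c (-t)) - t) atTop (𝓝 (bminus x)))
    (hnplus : ∀ t : ℝ, bplus (c t) = -t)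
    (hnminus : ∀ t : ℝ, bminus (c t) = t) :
    ∀ x, x ≠ ω → bplus x + bminus x = 0 :=
  busemann_flat_general S hSI ω σ hσ hω c hrange hunit bplus bminus hbplus hbminus hnplus hnminus
end

section
/- Let X be a compact Hausdorff metric-measurable Möbius space, T = (x,y,z) a triple of pairwise distinct points of X, and (φᵢ) a sequence of Möbius automorphisms of X such that φᵢ(T) converges (along a nonprincipal ultrafilter θ on ℕ) to a triple T' = (x',y',z') of pairwise distinct points. Then the pointwise ultralimit φ = lim_θ φᵢ exists, is a Möbius automorphism of X, and φ(T) = T'. -/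
/-!
Each `φᵢ` preserves cross-ratio triples, which are continuous in the four points away from
the base point `ω`, and positive proportionality of triples passes to the limit as linear
dependence. Hence the ultralimit `ψ` preserves a cross-ratio triple as soon as one of its
coordinates stays nonzero, which injectivity of `ψ` guarantees. Injectivity, and the
convergence `φᵢ(sᵢ) → ψ(lim sᵢ)` that gives surjectivity, come from one degeneration
argument: for anchors `a, b` among `x, y, z` whose limits stay apart from each other and from
that of `p`, the first coordinate of the cross-ratio triple of `(p, q, a, b)` vanishes exactly
when `p = q`, before and after the limit. The base point `ω` must avoid the finitely many
points involved, so `X` is taken infinite; for finite `X` the sequence eventually equals `ψ`.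
-/

open Filter Topology Function

namespace ProjEq

variable {a b c : ℝ × ℝ × ℝ}

theorem symm (h : ProjEq a b) : ProjEq b a := by
  obtain ⟨k, hk, h1, h2, h3⟩ := h
  refine ⟨k⁻¹, inv_pos.2 hk, ?_, ?_, ?_⟩ <;>
    simp only [h1, h2, h3, inv_mul_cancel_left₀ hk.ne']

theorem trans (h : ProjEq a b) (h' : ProjEq b c) : ProjEq a c := by
  obtain ⟨k, hk, h1, h2, h3⟩ := h
  obtain ⟨k', hk', h1', h2', h3'⟩ := h'
  exact ⟨k' * k, mul_pos hk' hk, by rw [h1', h1, mul_assoc], by rw [h2', h2, mul_assoc],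
    by rw [h3', h3, mul_assoc]⟩

end ProjEq

/-- The cross product `a × b` vanishes. Unlike `ProjEq`, this is a closed condition. -/
def Proportional (a b : ℝ × ℝ × ℝ) : Prop :=
  a.1 * b.2.1 = a.2.1 * b.1 ∧ a.1 * b.2.2 = a.2.2 * b.1 ∧ a.2.1 * b.2.2 = a.2.2 * b.2.1

theorem ProjEq.proportional {a b : ℝ × ℝ × ℝ} (h : ProjEq a b) : Proportional a b := by
  obtain ⟨k, -, h1, h2, h3⟩ := h
  rw [Proportional, h1, h2, h3]
  exact ⟨by ring, by ring, by ring⟩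

namespace Proportional

variable {a b : ℝ × ℝ × ℝ}

theorem symm (h : Proportional a b) : Proportional b a :=
  ⟨by linear_combination -h.1, by linear_combination -h.2.1, by linear_combination -h.2.2⟩

theorem of_tendsto {ι : Type*} {l : Filter ι} [l.NeBot] {A B : ι → ℝ × ℝ × ℝ}
    (hA : Tendsto A l (𝓝 a)) (hB : Tendsto B l (𝓝 b))
    (h : ∀ᶠ i in l, Proportional (A i) (B i)) : Proportional a b := by
  have hclosed : IsClosed {q : (ℝ × ℝ × ℝ) × (ℝ × ℝ × ℝ) | Proportional q.1 q.2} :=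
    (isClosed_eq (by fun_prop) (by fun_prop)).inter
      ((isClosed_eq (by fun_prop) (by fun_prop)).inter (isClosed_eq (by fun_prop) (by fun_prop)))
  exact hclosed.mem_of_tendsto (hA.prodMk_nhds hB) h

theorem fst_eq_zero (h : Proportional a b) (ha : a.2.1 ≠ 0) (ha₀ : a.1 = 0) : b.1 = 0 := by
  have h₁ := h.1
  rw [ha₀, zero_mul] at h₁
  exact (mul_eq_zero.1 h₁.symm).resolve_left ha

theorem projEq (h : Proportional a b)
    (hpos : (0 < a.1 ∧ 0 < b.1) ∨ (0 < a.2.1 ∧ 0 < b.2.1)) : ProjEq a b := by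
  obtain ⟨h1, h2, h3⟩ := h
  rcases hpos with ⟨ha, hb⟩ | ⟨ha, hb⟩
  · refine ⟨b.1 / a.1, div_pos hb ha, ?_, ?_, ?_⟩ <;> field_simp
    · linear_combination h1
    · linear_combination h2
  · refine ⟨b.2.1 / a.2.1, div_pos hb ha, ?_, ?_, ?_⟩ <;> field_simp
    · linear_combination -h1
    · linear_combination h3

end Proportional

namespace Admissible

variable {α β : Type*} {x y z u : α}

theorem of_ne_s19 (hxz : x ≠ z) (hxu : x ≠ u) (hzu : z ≠ u) : Admissible x y z u := by
  rintro (⟨h, h'⟩ | ⟨h, h'⟩ | ⟨h, -⟩ | ⟨-, h⟩)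
  exacts [hxz (h.trans h'), hxu (h.trans h'), hxz h, hzu h]

theorem map {f : α → β} (hf : Injective f) (h : Admissible x y z u) :
    Admissible (f x) (f y) (f z) (f u) := by
  simpa only [Admissible, hf.eq_iff] using h

theorem ne_or_ne (h : Admissible x y z u) : (x ≠ y ∧ z ≠ u) ∨ (x ≠ z ∧ y ≠ u) := by
  unfold Admissible at h
  grind

end Admissible

theorem crt_of_ne {X : Type*} (d : X → X → ℝ) {ω x y z u : X}
    (hx : x ≠ ω) (hy : y ≠ ω) (hz : z ≠ ω) (hu : u ≠ ω) :
    crt d ω x y z u = (d x y * d z u, d x z * d y u, d x u * d y z) := by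
  simp [crt, hx, hy, hz, hu]

theorem exists_pair_apply_ne_of_triple {α β : Type*} (f : α → β) {x y z : α}
    (hxy : f x ≠ f y) (hxz : f x ≠ f z) (hyz : f y ≠ f z) (c : β) :
    ∃ a b, f a ≠ f b ∧ f a ≠ c ∧ f b ≠ c := by
  by_cases hx : f x = c
  · exact ⟨y, z, hyz, fun h => hxy (hx.trans h.symm), fun h => hxz (hx.trans h.symm)⟩
  by_cases hy : f y = c
  · exact ⟨x, z, hxz, hx, fun h => hyz (hy.trans h.symm)⟩
  exact ⟨x, y, hxy, hx, hy⟩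

theorem exists_eq_of_forall_tendsto {ι X : Type*} [TopologicalSpace X] [T1Space X] [Finite X]
    {l : Filter ι} [l.NeBot] {φ : ι → X → X} {ψ : X → X}
    (hψ : ∀ p, Tendsto (fun i => φ i p) l (𝓝 (ψ p))) : ∃ i, φ i = ψ := by
  have h : ∀ᶠ i in l, ∀ p, φ i p = ψ p :=
    eventually_all.2 fun p => by simpa only [nhds_discrete, tendsto_pure] using hψ p
  obtain ⟨i, hi⟩ := h.exists
  exact ⟨i, funext hi⟩

namespace MoebiusStructure

variable {X : Type*} [TopologicalSpace X] (S : MoebiusStructure X) {ι : Type*}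

theorem dist_mul_dist_pos {ω x y z u : X} (hx : x ≠ ω) (hy : y ≠ ω) (hz : z ≠ ω) (hu : u ≠ ω)
    (hxy : x ≠ y) (hzu : z ≠ u) : 0 < S.dist ω x y * S.dist ω z u :=
  mul_pos (S.dist_pos ω x y hx hy hxy) (S.dist_pos ω z u hz hu hzu)

theorem tendsto_dist {l : Filter ι} {ω p q : X} {P Q : ι → X}
    (hP : Tendsto P l (𝓝 p)) (hQ : Tendsto Q l (𝓝 q)) (hp : p ≠ ω) (hq : q ≠ ω) :
    Tendsto (fun i => S.dist ω (P i) (Q i)) l (𝓝 (S.dist ω p q)) := by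
  rw [Metric.tendsto_nhds]
  intro ε hε
  have ball_mem : ∀ c ≠ ω, {w | w ≠ ω ∧ S.dist ω c w < ε / 2} ∈ 𝓝 c := fun c hc =>
    (S.isOpen_ball ω c _ hc).mem_nhds ⟨hc, by rw [S.dist_self]; positivity⟩
  filter_upwards [hP (ball_mem p hp), hQ (ball_mem q hq)] with i ⟨hPi, hpP⟩ ⟨hQi, hqQ⟩
  have t₁ := S.dist_triangle ω (P i) p (Q i) hPi hp hQi
  have t₂ := S.dist_triangle ω p q (Q i) hp hq hQi
  have t₃ := S.dist_triangle ω p (P i) q hp hPi hq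
  have t₄ := S.dist_triangle ω (P i) (Q i) q hPi hQi hq
  rw [S.dist_comm ω (P i) p] at t₁
  rw [S.dist_comm ω (Q i) q] at t₄
  rw [Real.dist_eq, abs_sub_lt_iff]
  constructor <;> linarith

theorem tendsto_crt [T1Space X] {l : Filter ι} {ω p q r u : X} {P Q R U : ι → X}
    (hP : Tendsto P l (𝓝 p)) (hQ : Tendsto Q l (𝓝 q)) (hR : Tendsto R l (𝓝 r))
    (hU : Tendsto U l (𝓝 u)) (hp : p ≠ ω) (hq : q ≠ ω) (hr : r ≠ ω) (hu : u ≠ ω) :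
    Tendsto (fun i => crt (S.dist ω) ω (P i) (Q i) (R i) (U i)) l
      (𝓝 (crt (S.dist ω) ω p q r u)) := by
  rw [crt_of_ne _ hp hq hr hu]
  refine Tendsto.congr' ?_ <|
    ((S.tendsto_dist hP hQ hp hq).mul (S.tendsto_dist hR hU hr hu)).prodMk_nhds <|
      ((S.tendsto_dist hP hR hp hr).mul (S.tendsto_dist hQ hU hq hu)).prodMk_nhds
        ((S.tendsto_dist hP hU hp hu).mul (S.tendsto_dist hQ hR hq hr))
  filter_upwards [hP.eventually_ne hp, hQ.eventually_ne hq, hR.eventually_ne hr,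
    hU.eventually_ne hu] with i h₁ h₂ h₃ h₄
  rw [crt_of_ne _ h₁ h₂ h₃ h₄]

theorem isMoebiusMap_of_forall_exists {f : X → X} (hf : Injective f)
    (h : ∀ x y z u, Admissible x y z u → ∃ ω,
      ProjEq (crt (S.dist ω) ω x y z u) (crt (S.dist ω) ω (f x) (f y) (f z) (f u))) :
    S.IsMoebiusMap f := by
  intro ω₀ x y z u hadm
  obtain ⟨ω, hω⟩ := h x y z u hadm
  exact ((S.moebius_equivalent ω₀ ω x y z u hadm).trans hω).trans
    (S.moebius_equivalent ω ω₀ _ _ _ _ (hadm.map hf))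

variable {φ : ι → X → X}

theorem proportional_crt_of_tendsto [T1Space X] (hφ : ∀ i, S.IsMoebiusMap (φ i))
    {l : Filter ι} [l.NeBot] {ω p q r u p' q' r' u' : X} {P Q R U : ι → X}
    (hP : Tendsto P l (𝓝 p)) (hQ : Tendsto Q l (𝓝 q)) (hR : Tendsto R l (𝓝 r))
    (hU : Tendsto U l (𝓝 u))
    (hP' : Tendsto (fun i => φ i (P i)) l (𝓝 p')) (hQ' : Tendsto (fun i => φ i (Q i)) l (𝓝 q'))
    (hR' : Tendsto (fun i => φ i (R i)) l (𝓝 r')) (hU' : Tendsto (fun i => φ i (U i)) l (𝓝 u'))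
    (hadm : ∀ᶠ i in l, Admissible (P i) (Q i) (R i) (U i))
    (hω : ω ∉ ({p, q, r, u, p', q', r', u'} : Set X)) :
    Proportional (crt (S.dist ω) ω p q r u) (crt (S.dist ω) ω p' q' r' u') := by
  simp only [Set.mem_insert_iff, Set.mem_singleton_iff, eq_comm (a := ω), not_or] at hω
  obtain ⟨hp, hq, hr, hu, hp', hq', hr', hu'⟩ := hω
  exact .of_tendsto (S.tendsto_crt hP hQ hR hU hp hq hr hu)
    (S.tendsto_crt hP' hQ' hR' hU' hp' hq' hr' hu')
    (hadm.mono fun i hi => (hφ i ω _ _ _ _ hi).proportional)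

theorem eq_iff_eq_of_tendsto [T2Space X] [Infinite X] (hφ : ∀ i, S.IsMoebiusMap (φ i))
    {l : Filter ι} [l.NeBot] {p q a b p' q' a' b' : X} {P Q : ι → X}
    (hP : Tendsto P l (𝓝 p)) (hQ : Tendsto Q l (𝓝 q))
    (hP' : Tendsto (fun i => φ i (P i)) l (𝓝 p')) (hQ' : Tendsto (fun i => φ i (Q i)) l (𝓝 q'))
    (ha : Tendsto (fun i => φ i a) l (𝓝 a')) (hb : Tendsto (fun i => φ i b) l (𝓝 b'))
    (hab' : a' ≠ b') (hpa : p ≠ a) (hpb : p ≠ b) (hpa' : p' ≠ a') (hpb' : p' ≠ b') :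
    p = q ↔ p' = q' := by
  have hab : a ≠ b := by
    rintro rfl
    exact hab' (tendsto_nhds_unique ha hb)
  obtain ⟨ω, hω⟩ := (Set.toFinite {p, q, a, b, p', q', a', b'}).exists_notMem
  have hprop := S.proportional_crt_of_tendsto hφ hP hQ tendsto_const_nhds tendsto_const_nhds
    hP' hQ' ha hb (by filter_upwards [hP.eventually_ne hpa, hP.eventually_ne hpb] with i h₁ h₂
      using Admissible.of_ne_s19 h₁ h₂ hab) hω
  simp only [Set.mem_insert_iff, Set.mem_singleton_iff, eq_comm (a := ω), not_or] at hω
  obtain ⟨hpω, hqω, haω, hbω, hp'ω, hq'ω, ha'ω, hb'ω⟩ := hω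
  rw [crt_of_ne _ hpω hqω haω hbω, crt_of_ne _ hp'ω hq'ω ha'ω hb'ω] at hprop
  constructor
  · rintro rfl
    by_contra hpq'
    have h₀ := hprop.fst_eq_zero (S.dist_mul_dist_pos hpω haω hpω hbω hpa hpb).ne'
      (by rw [S.dist_self, zero_mul])
    exact (S.dist_mul_dist_pos hp'ω hq'ω ha'ω hb'ω hpq' hab').ne' h₀
  · rintro rfl
    by_contra hpq
    have h₀ := hprop.symm.fst_eq_zero (S.dist_mul_dist_pos hp'ω ha'ω hp'ω hb'ω hpa' hpb').ne'
      (by rw [S.dist_self, zero_mul])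
    exact (S.dist_mul_dist_pos hpω hqω haω hbω hpq hab).ne' h₀

variable {ψ : X → X}

theorem injective_of_tendsto [T2Space X] [Infinite X] (hφ : ∀ i, S.IsMoebiusMap (φ i))
    {l : Filter ι} [l.NeBot] (hψ : ∀ p, Tendsto (fun i => φ i p) l (𝓝 (ψ p))) {x y z : X}
    (hxy : ψ x ≠ ψ y) (hxz : ψ x ≠ ψ z) (hyz : ψ y ≠ ψ z) : Injective ψ := by
  intro p q hpq
  obtain ⟨a, b, hab, hap, hbp⟩ := exists_pair_apply_ne_of_triple ψ hxy hxz hyz (ψ p)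
  exact (S.eq_iff_eq_of_tendsto hφ tendsto_const_nhds tendsto_const_nhds (hψ p) (hψ q)
    (hψ a) (hψ b) hab (ne_of_apply_ne ψ hap.symm) (ne_of_apply_ne ψ hbp.symm)
    hap.symm hbp.symm).2 hpq

theorem tendsto_apply_of_tendsto [T2Space X] [CompactSpace X] [Infinite X]
    (hφ : ∀ i, S.IsMoebiusMap (φ i)) {θ : Ultrafilter ι}
    (hψ : ∀ p, Tendsto (fun i => φ i p) θ (𝓝 (ψ p))) {x y z : X}
    (hxy : ψ x ≠ ψ y) (hxz : ψ x ≠ ψ z) (hyz : ψ y ≠ ψ z) {s : ι → X} {p : X}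
    (hs : Tendsto s θ (𝓝 p)) : Tendsto (fun i => φ i (s i)) θ (𝓝 (ψ p)) := by
  have hv : Tendsto (fun i => φ i (s i)) θ (𝓝 _) := (θ.map fun i => φ i (s i)).le_nhds_lim
  obtain ⟨a, b, hab, hap, hbp⟩ := exists_pair_apply_ne_of_triple ψ hxy hxz hyz (ψ p)
  rwa [(S.eq_iff_eq_of_tendsto hφ tendsto_const_nhds hs (hψ p) hv (hψ a) (hψ b) hab
    (ne_of_apply_ne ψ hap.symm) (ne_of_apply_ne ψ hbp.symm) hap.symm hbp.symm).1 rfl]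

theorem surjective_of_tendsto [T2Space X] [CompactSpace X] [Infinite X]
    (hφ : ∀ i, S.IsMoebiusMap (φ i)) (hφsurj : ∀ i, Surjective (φ i)) {θ : Ultrafilter ι}
    (hψ : ∀ p, Tendsto (fun i => φ i p) θ (𝓝 (ψ p))) {x y z : X}
    (hxy : ψ x ≠ ψ y) (hxz : ψ x ≠ ψ z) (hyz : ψ y ≠ ψ z) : Surjective ψ := by
  intro w
  choose s hs using fun i => hφsurj i w
  have hp : Tendsto s θ (𝓝 _) := (θ.map s).le_nhds_lim
  refine ⟨_, tendsto_nhds_unique (S.tendsto_apply_of_tendsto hφ hψ hxy hxz hyz hp) ?_⟩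
  simpa only [hs] using tendsto_const_nhds

theorem isMoebiusMap_of_tendsto [T1Space X] [Infinite X] (hφ : ∀ i, S.IsMoebiusMap (φ i))
    {l : Filter ι} [l.NeBot] (hψ : ∀ p, Tendsto (fun i => φ i p) l (𝓝 (ψ p)))
    (hinj : Injective ψ) : S.IsMoebiusMap ψ := by
  refine S.isMoebiusMap_of_forall_exists hinj fun p q r u hadm => ?_
  obtain ⟨ω, hω⟩ := (Set.toFinite {p, q, r, u, ψ p, ψ q, ψ r, ψ u}).exists_notMem
  refine ⟨ω, (S.proportional_crt_of_tendsto hφ tendsto_const_nhds tendsto_const_nhds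
    tendsto_const_nhds tendsto_const_nhds (hψ p) (hψ q) (hψ r) (hψ u)
    (.of_forall fun _ => hadm) hω).projEq ?_⟩
  simp only [Set.mem_insert_iff, Set.mem_singleton_iff, eq_comm (a := ω), not_or] at hω
  obtain ⟨hpω, hqω, hrω, huω, hp'ω, hq'ω, hr'ω, hu'ω⟩ := hω
  rw [crt_of_ne _ hpω hqω hrω huω, crt_of_ne _ hp'ω hq'ω hr'ω hu'ω]
  rcases hadm.ne_or_ne with ⟨h₁, h₂⟩ | ⟨h₁, h₂⟩
  · exact .inl ⟨S.dist_mul_dist_pos hpω hqω hrω huω h₁ h₂,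
      S.dist_mul_dist_pos hp'ω hq'ω hr'ω hu'ω (hinj.ne h₁) (hinj.ne h₂)⟩
  · exact .inr ⟨S.dist_mul_dist_pos hpω hrω hqω huω h₁ h₂,
      S.dist_mul_dist_pos hp'ω hr'ω hq'ω hu'ω (hinj.ne h₁) (hinj.ne h₂)⟩

end MoebiusStructure

theorem ultralimit_of_moebius_automorphisms_general
    {X : Type*} [TopologicalSpace X] [CompactSpace X] [T2Space X]
    (S : MoebiusStructure X)
    (θ : Ultrafilter ℕ)
    (φ : ℕ → X → X)
    (hφ : ∀ i, S.IsMoebiusMap (φ i) ∧ Function.Bijective (φ i))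
    (x y z x' y' z' : X)
    (hxy' : x' ≠ y') (hxz' : x' ≠ z') (hyz' : y' ≠ z')
    (hx : Tendsto (fun i => φ i x) θ (𝓝 x'))
    (hy : Tendsto (fun i => φ i y) θ (𝓝 y'))
    (hz : Tendsto (fun i => φ i z) θ (𝓝 z')) :
    ∃ ψ : X → X, (∀ p : X, Tendsto (fun i => φ i p) θ (𝓝 (ψ p))) ∧
      S.IsMoebiusMap ψ ∧ Function.Bijective ψ ∧
      ψ x = x' ∧ ψ y = y' ∧ ψ z = z' := by
  set ψ : X → X := fun p => (θ.map fun i => φ i p).lim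
  have hψ : ∀ p, Tendsto (fun i => φ i p) θ (𝓝 (ψ p)) := fun p =>
    (θ.map fun i => φ i p).le_nhds_lim
  have hψx : ψ x = x' := tendsto_nhds_unique (hψ x) hx
  have hψy : ψ y = y' := tendsto_nhds_unique (hψ y) hy
  have hψz : ψ z = z' := tendsto_nhds_unique (hψ z) hz
  suffices h : S.IsMoebiusMap ψ ∧ Bijective ψ from ⟨ψ, hψ, h.1, h.2, hψx, hψy, hψz⟩
  rcases finite_or_infinite X with hX | hX
  · obtain ⟨i, hi⟩ := exists_eq_of_forall_tendsto hψ
    exact hi ▸ hφ i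
  subst hψx hψy hψz
  have hmoeb : ∀ i, S.IsMoebiusMap (φ i) := fun i => (hφ i).1
  have hinj := S.injective_of_tendsto hmoeb hψ hxy' hxz' hyz'
  exact ⟨S.isMoebiusMap_of_tendsto hmoeb hψ hinj, hinj,
    S.surjective_of_tendsto hmoeb (fun i => (hφ i).2.2) hψ hxy' hxz' hyz'⟩

/-- in a compact Hausdorff Möbius (Ptolemy) space, if a sequence of Möbius
automorphisms maps a nondegenerate triple to triples converging (along a nonprincipal
ultrafilter `θ`) to a nondegenerate triple, then the pointwise `θ`-ultralimit exists, is
a Möbius automorphism, and maps the triple to the limit triple. -/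
theorem ultralimit_of_moebius_automorphisms
    {X : Type*} [TopologicalSpace X] [CompactSpace X] [T2Space X]
    (S : MoebiusStructure X)
    (θ : Ultrafilter ℕ) (hθ : (θ : Filter ℕ) ≤ Filter.cofinite)
    (φ : ℕ → X → X)
    (hφ : ∀ i, S.IsMoebiusMap (φ i) ∧ Function.Bijective (φ i))
    (x y z x' y' z' : X)
    (hxy : x ≠ y) (hxz : x ≠ z) (hyz : y ≠ z)
    (hxy' : x' ≠ y') (hxz' : x' ≠ z') (hyz' : y' ≠ z')
    (hx : Tendsto (fun i => φ i x) θ (𝓝 x'))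
    (hy : Tendsto (fun i => φ i y) θ (𝓝 y'))
    (hz : Tendsto (fun i => φ i z) θ (𝓝 z')) :
    ∃ ψ : X → X, (∀ p : X, Tendsto (fun i => φ i p) θ (𝓝 (ψ p))) ∧
      S.IsMoebiusMap ψ ∧ Function.Bijective ψ ∧
      ψ x = x' ∧ ψ y = y' ∧ ψ z = z' :=
  ultralimit_of_moebius_automorphisms_general S θ φ hφ x y z x' y' z' hxy' hxz' hyz' hx hy hz
end
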